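/- Let C ⊂ ℙ²(ℂ) be the cubic x³ + y³ − z³ = 0. The four points (1:0:1), (1:−b:−1), (1:−εb:−1), (1:−ε²b:−1), where b³ = 2 and ε is a primitive third root of unity, all lie on C, and at each of the last three points the tangent line to C passes through (1:0:1). -/
import Mathlib

/-- The points (1:0:1), (1:−b:−1), (1:−εb:−1), (1:−ε²b:−1) lie on the cubic
x³ + y³ − z³ = 0 (b³ = 2, ε²+ε+1 = 0), and the tangent line at each of the last
three points (given by the gradient (3x₀², 3y₀², −3z₀²)) passes through (1:0:1). -/
theorem stmt_12 (ε b : ℂ) (hε : ε^2 + ε + 1 = 0) (hb : b^3 = 2) :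
    let F : ℂ → ℂ → ℂ → ℂ := fun x y z => x^3 + y^3 - z^3
    -- the tangent line at (x₀,y₀,z₀) evaluated at the point (1,0,1)
    let tangentThru101 : ℂ → ℂ → ℂ → Prop :=
      fun x₀ y₀ z₀ => 3*x₀^2 * 1 + 3*y₀^2 * 0 - 3*z₀^2 * 1 = 0
    F 1 0 1 = 0 ∧
    F 1 (-b) (-1) = 0 ∧ F 1 (-(ε*b)) (-1) = 0 ∧ F 1 (-(ε^2*b)) (-1) = 0 ∧
    tangentThru101 1 (-b) (-1) ∧
    tangentThru101 1 (-(ε*b)) (-1) ∧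
    tangentThru101 1 (-(ε^2*b)) (-1) := by
  have hε3 : ε^3 = 1 := by linear_combination (ε - 1) * hε
  refine ⟨by ring, by linear_combination -hb, by linear_combination -b^3*hε3 - hb,
    by linear_combination -(ε^3+1)*b^3*hε3 - hb, by ring, by ring, by ring⟩
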